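/- Let {S_n}_{n=1}^∞ be a sequence of increasing sequences (infinite subsets) of the positive integers. Then there exists an increasing sequence Q ⊂ ℤ⁺ such that for each n ≥ 1, the upper density of S_n ∩ Q with respect to Q equals 1, i.e., limsup_{m→∞} (1/m)|S_n ∩ Q ∩ {q_1,…,q_m}| = 1 where Q = {q_1 < q_2 < ⋯}. -/
import Mathlib


open Filter Set
open scoped Classical

namespace Stmt1Aux

variable (S : ℕ → ℕ → ℕ)

/-- `(L k, M k)`: cumulative length and an upper bound for values after `k` blocks. -/
def LM : ℕ → ℕ × ℕ
  | 0 => (0, 0)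
  | k + 1 => ((LM k).1 + ((k + 1) * (LM k).1 + 1),
      S (Nat.unpair k).1 ((LM k).2 + ((k + 1) * (LM k).1 + 1)))

def L (k : ℕ) : ℕ := (LM S k).1
def M (k : ℕ) : ℕ := (LM S k).2
def c (k : ℕ) : ℕ := (k + 1) * L S k + 1

lemma L_zero : L S 0 = 0 := rfl
lemma L_succ (k : ℕ) : L S (k + 1) = L S k + c S k := rfl
lemma M_succ (k : ℕ) : M S (k + 1) = S (Nat.unpair k).1 (M S k + c S k) := rfl

lemma L_strictMono : StrictMono (L S) :=
  strictMono_nat_of_lt_succ fun k => by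
    rw [L_succ]; have : 0 < c S k := Nat.succ_pos _; omega

lemma le_L (k : ℕ) : k ≤ L S k := (L_strictMono S).le_apply

lemma exists_block (i : ℕ) : ∃ k, i < L S (k + 1) :=
  ⟨i, lt_of_lt_of_le (Nat.lt_succ_self i) (le_L S (i + 1))⟩

noncomputable def K (i : ℕ) : ℕ := Nat.find (exists_block S i)

lemma lt_L_K (i : ℕ) : i < L S (K S i + 1) := Nat.find_spec (exists_block S i)

lemma L_K_le (i : ℕ) : L S (K S i) ≤ i := by
  rcases Nat.eq_zero_or_pos (K S i) with h | h
  · rw [h, L_zero]; exact Nat.zero_le _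
  · have h2 : ¬ i < L S (K S i - 1 + 1) :=
      Nat.find_min (exists_block S i) (show K S i - 1 < K S i by omega)
    have h3 : K S i - 1 + 1 = K S i := by omega
    rw [h3] at h2
    exact le_of_not_gt h2

lemma K_eq (k i : ℕ) (h1 : L S k ≤ i) (h2 : i < L S (k + 1)) : K S i = k := by
  have hk : K S i ≤ k := Nat.find_min' _ h2
  by_contra h
  have hlt : K S i < k := lt_of_le_of_ne hk h
  have hle : L S (K S i + 1) ≤ L S k := (L_strictMono S).monotone (by omega)
  have := lt_L_K S i
  omega

noncomputable def q (i : ℕ) : ℕ :=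
  S (Nat.unpair (K S i)).1 (M S (K S i) + 1 + (i - L S (K S i)))

lemma q_pos (hS : ∀ n, StrictMono (S n)) (i : ℕ) : 0 < q S i :=
  lt_of_lt_of_le (by omega : 0 < M S (K S i) + 1 + (i - L S (K S i))) (hS _).le_apply

lemma q_strictMono (hS : ∀ n, StrictMono (S n)) : StrictMono (q S) := by
  apply strictMono_nat_of_lt_succ
  intro i
  by_cases h : i + 1 < L S (K S i + 1)
  · have hK : K S (i + 1) = K S i :=
      K_eq S (K S i) (i + 1) (le_trans (L_K_le S i) (Nat.le_succ i)) h
    unfold q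
    rw [hK]
    apply hS _
    have h1 : L S (K S i) ≤ i := L_K_le S i
    omega
  · have heq : i + 1 = L S (K S i + 1) := by
      have := lt_L_K S i; omega
    have hK : K S (i + 1) = K S i + 1 :=
      K_eq S (K S i + 1) (i + 1) (le_of_eq heq.symm)
        (by rw [heq]; exact L_strictMono S (Nat.lt_succ_self _))
    have hqi : q S i = M S (K S i + 1) := by
      unfold q
      rw [M_succ]
      congr 1
      have h1 : L S (K S i) ≤ i := L_K_le S i
      have h2 : i + 1 = L S (K S i) + c S (K S i) := by rw [heq, L_succ]
      omega
    have hqi1 : q S (i + 1) =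
        S (Nat.unpair (K S i + 1)).1 (M S (K S i + 1) + 1 + ((i + 1) - L S (K S i + 1))) := by
      unfold q; rw [hK]
    rw [hqi, hqi1]
    calc M S (K S i + 1) < M S (K S i + 1) + 1 + ((i + 1) - L S (K S i + 1)) := by omega
    _ ≤ _ := (hS _).le_apply

lemma mem_range_q (k i : ℕ) (h1 : L S k ≤ i) (h2 : i < L S (k + 1)) :
    q S i ∈ Set.range (S (Nat.unpair k).1) := by
  unfold q
  rw [K_eq S k i h1 h2]
  exact ⟨_, rfl⟩

lemma sum_ge (k : ℕ) :
    (c S k : ℝ) ≤ ∑ i ∈ Finset.range (L S (k + 1)),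
      if q S i ∈ Set.range (S (Nat.unpair k).1) then (1 : ℝ) else 0 := by
  have hsub : Finset.Ico (L S k) (L S (k + 1)) ⊆ Finset.range (L S (k + 1)) := by
    intro i hi
    rw [Finset.mem_Ico] at hi
    exact Finset.mem_range.2 hi.2
  calc (c S k : ℝ)
      = ∑ i ∈ Finset.Ico (L S k) (L S (k + 1)), (1 : ℝ) := by
        rw [Finset.sum_const, Nat.card_Ico, L_succ]
        simp
    _ = ∑ i ∈ Finset.Ico (L S k) (L S (k + 1)),
          (if q S i ∈ Set.range (S (Nat.unpair k).1) then (1 : ℝ) else 0) := by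
        refine Finset.sum_congr rfl fun i hi => ?_
        rw [Finset.mem_Ico] at hi
        rw [if_pos (mem_range_q S k i hi.1 hi.2)]
    _ ≤ _ := by
        refine Finset.sum_le_sum_of_subset_of_nonneg hsub fun i _ _ => ?_
        split <;> norm_num

lemma key_nat (k : ℕ) : (k + 1) * L S (k + 1) ≤ (k + 2) * c S k := by
  rw [L_succ]
  unfold c
  set x := L S k
  nlinarith [Nat.zero_le x]

lemma ratio_ge (k : ℕ) :
    1 - 1 / (k + 2 : ℝ) ≤ (∑ i ∈ Finset.range (L S (k + 1)),
      if q S i ∈ Set.range (S (Nat.unpair k).1) then (1 : ℝ) else 0) / (L S (k + 1)) := by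
  have hm : (0 : ℝ) < (L S (k + 1) : ℝ) := by
    have : 1 ≤ L S (k + 1) := le_trans (Nat.succ_le_succ (Nat.zero_le k)) (le_L S (k + 1))
    exact_mod_cast Nat.lt_of_lt_of_le Nat.zero_lt_one this
  have hkey : ((k : ℝ) + 1) * (L S (k + 1) : ℝ) ≤ ((k : ℝ) + 2) * (c S k : ℝ) := by
    have := key_nat S k
    push_cast
    exact_mod_cast Nat.cast_le.2 this |>.trans_eq (by push_cast; ring)
  have h1 : (c S k : ℝ) / (L S (k + 1) : ℝ) ≤ (∑ i ∈ Finset.range (L S (k + 1)),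
      if q S i ∈ Set.range (S (Nat.unpair k).1) then (1 : ℝ) else 0) / (L S (k + 1)) := by
    gcongr
    exact sum_ge S k
  have h2 : ((k : ℝ) + 1) / ((k : ℝ) + 2) ≤ (c S k : ℝ) / (L S (k + 1) : ℝ) := by
    rw [div_le_div_iff₀ (by positivity) hm]
    linarith
  have h3 : 1 - 1 / ((k : ℝ) + 2) = ((k : ℝ) + 1) / ((k : ℝ) + 2) := by
    field_simp
    ring
  linarith

end Stmt1Aux

theorem stmt1 (S : ℕ → ℕ → ℕ) (hS : ∀ n, StrictMono (S n)) (hpos : ∀ n i, 0 < S n i) :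
    ∃ q : ℕ → ℕ, StrictMono q ∧ (∀ i, 0 < q i) ∧ ∀ n : ℕ,
      Filter.limsup (fun m => (∑ i ∈ Finset.range m,
        if q i ∈ Set.range (S n) then (1 : ℝ) else 0) / m) Filter.atTop = 1 := by
  refine ⟨Stmt1Aux.q S, Stmt1Aux.q_strictMono S hS, Stmt1Aux.q_pos S hS, fun n => ?_⟩
  set u : ℕ → ℝ := fun m => (∑ i ∈ Finset.range m,
    if Stmt1Aux.q S i ∈ Set.range (S n) then (1 : ℝ) else 0) / m with hu
  have hge : ∀ m, 0 ≤ u m := by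
    intro m
    apply div_nonneg _ (Nat.cast_nonneg m)
    apply Finset.sum_nonneg
    intro i _
    split <;> norm_num
  have hle : ∀ m, u m ≤ 1 := by
    intro m
    rcases Nat.eq_zero_or_pos m with h | h
    · simp [hu, h]
    · rw [hu]
      rw [div_le_one (by exact_mod_cast h)]
      calc (∑ i ∈ Finset.range m, if Stmt1Aux.q S i ∈ Set.range (S n) then (1 : ℝ) else 0)
          ≤ ∑ i ∈ Finset.range m, (1 : ℝ) := by
            refine Finset.sum_le_sum fun i _ => ?_
            split <;> norm_num
        _ = m := by simp
  have hbdd : IsBoundedUnder (· ≤ ·) atTop u := isBoundedUnder_of ⟨1, hle⟩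
  have hcobdd : IsCoboundedUnder (· ≤ ·) atTop u :=
    (isBoundedUnder_of (r := (· ≥ ·)) ⟨0, hge⟩).isCoboundedUnder_le
  refine le_antisymm (limsup_le_of_le hcobdd (Eventually.of_forall hle)) ?_
  refine le_of_forall_pos_le_add fun ε hε => ?_
  have hfreq : ∃ᶠ m in atTop, 1 - ε ≤ u m := by
    rw [frequently_atTop]
    intro N
    set j := max N ⌈1 / ε⌉₊ with hj
    set k := Nat.pair n j with hk
    have hjk : j ≤ k := Nat.right_le_pair n j
    refine ⟨Stmt1Aux.L S (k + 1), ?_, ?_⟩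
    · calc N ≤ j := le_max_left _ _
        _ ≤ k + 1 := by omega
        _ ≤ Stmt1Aux.L S (k + 1) := Stmt1Aux.le_L S (k + 1)
    · have hratio := Stmt1Aux.ratio_ge S k
      rw [hk, Nat.unpair_pair] at hratio
      have hεk : 1 / ((k : ℝ) + 2) ≤ ε := by
        rw [div_le_iff₀ (by positivity)]
        have h1 : (⌈1 / ε⌉₊ : ℝ) ≤ (k : ℝ) := by
          exact_mod_cast le_trans (le_max_right N ⌈1 / ε⌉₊) hjk
        have h2 : 1 / ε ≤ (k : ℝ) := le_trans (Nat.le_ceil _) h1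
        have h3 : 1 ≤ ε * (k : ℝ) := by
          rw [div_le_iff₀ hε] at h2
          linarith [mul_comm ε (k : ℝ)]
        nlinarith
      have : 1 - ε ≤ 1 - 1 / ((k : ℝ) + 2) := by linarith
      exact le_trans this hratio
  have h1 : 1 - ε ≤ limsup u atTop := le_limsup_of_frequently_le hfreq hbdd
  linarith
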